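/- arXiv:1607.08505 — 2 statements merged into one kernel-verified Lean document; each statement's English description precedes it below -/
import Mathlib

section
/- Let κ be an uncountable cardinal. Then (i) κ is Ulam measurable if and only if there is a singular countably additive pure state on l^∞(κ), and (ii) κ is measurable if and only if there is a singular <κ-additive pure state on l^∞(κ). -/
open scoped ComplexOrder

noncomputable section

/-- The C*-algebra `l^∞(X)` of bounded complex-valued functions on `X`. -/
abbrev Linf (X : Type) := lp (fun _ : X => ℂ) ⊤

/-- The indicator function `χ_S` as an element of `l^∞(X)`. -/
def chi {X : Type} (S : Set X) : Linf X :=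
  ⟨S.indicator 1, memℓp_infty ⟨1, by
    rintro r ⟨x, rfl⟩
    by_cases h : x ∈ S <;> simp [Set.indicator_apply, h]⟩⟩

/-- A state on `l^∞(X)`: a linear functional with `φ(1) = 1` which is nonnegative on
pointwise nonnegative functions. -/
def IsStateLinf {X : Type} (φ : Linf X →ₗ[ℂ] ℂ) : Prop :=
  φ 1 = 1 ∧ ∀ f : Linf X, (∀ x : X, 0 ≤ f x) → 0 ≤ φ f

/-- A singular state on `l^∞(X)`: it vanishes on all finitely supported functions. -/
def SingularLinf {X : Type} (φ : Linf X →ₗ[ℂ] ℂ) : Prop :=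
  ∀ f : Linf X, (Function.support fun x => f x).Finite → φ f = 0

/-- A countably additive state on `l^∞(X)`. -/
def CountablyAdditiveLinf {X : Type} (φ : Linf X →ₗ[ℂ] ℂ) : Prop :=
  ∀ S : ℕ → Set X, Pairwise (Function.onFun Disjoint S) →
    φ (chi (⋃ n, S n)) = ∑' n, φ (chi (S n))

/-- A `<κ`-additive state on `l^∞(X)`. -/
def KappaAdditiveLinf (κ : Cardinal.{0}) {X : Type} (φ : Linf X →ₗ[ℂ] ℂ) : Prop :=
  ∀ (ι : Type) (S : ι → Set X), Cardinal.mk ι < κ →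
    Pairwise (Function.onFun Disjoint S) →
    φ (chi (⋃ i, S i)) = ∑' i, φ (chi (S i))

/-- A pure state on `l^∞(X)`: an extreme point of the set of states. -/
def IsPureLinf {X : Type} (φ : Linf X →ₗ[ℂ] ℂ) : Prop :=
  φ ∈ Set.extremePoints ℝ {ψ : Linf X →ₗ[ℂ] ℂ | IsStateLinf ψ}

/-- A finitely additive probability measure defined on all subsets of `X`. -/
def IsFAProb {X : Type} (μ : Set X → ℝ) : Prop :=
  (∀ S : Set X, 0 ≤ μ S) ∧ μ Set.univ = 1 ∧
    ∀ S T : Set X, S ∩ T = ∅ → μ (S ∪ T) = μ S + μ T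

/-- The measure vanishes on singletons. -/
def VanishesOnSingletons {X : Type} (μ : Set X → ℝ) : Prop :=
  ∀ x : X, μ {x} = 0

/-- A countably additive measure. -/
def CountablyAdditiveMeas {X : Type} (μ : Set X → ℝ) : Prop :=
  ∀ S : ℕ → Set X, Pairwise (Function.onFun Disjoint S) →
    μ (⋃ n, S n) = ∑' n, μ (S n)

/-- A `<κ`-additive measure. -/
def KappaAdditiveMeas (κ : Cardinal.{0}) {X : Type} (μ : Set X → ℝ) : Prop :=
  ∀ (ι : Type) (S : ι → Set X), Cardinal.mk ι < κ →
    Pairwise (Function.onFun Disjoint S) →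
    μ (⋃ i, S i) = ∑' i, μ (S i)

/-- A `{0,1}`-valued measure. -/
def TwoValuedMeas {X : Type} (μ : Set X → ℝ) : Prop :=
  ∀ S : Set X, μ S = 0 ∨ μ S = 1

/-!
Pure states on `l^∞(X)` correspond to ultrafilters on `X`, i.e. to points of `βX`, and under this
correspondence a pure state `φ` and the two-valued measure `S ↦ φ(χ_S)` determine each other.
A pure state is `{0,1}`-valued on projections: if `0 < φ(χ_S) < 1`, then `φ` is a proper convex
combination of its normalised compressions `φ(χ_S · _)` and `φ(χ_{Sᶜ} · _)`. Conversely, the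
ultrafilter limit `f ↦ lim_U f` is pure, because any state giving weight one to every member of `U`
is that limit. Singular states correspond to free ultrafilters, and additivity of `φ` on
indicators is literally additivity of the measure.
-/

open Filter Topology

variable {X : Type}

@[simp] lemma chi_apply (S : Set X) (x : X) : chi S x = S.indicator 1 x := rfl

lemma chi_nonneg (S : Set X) (x : X) : 0 ≤ chi S x := by
  by_cases hx : x ∈ S <;> simp [hx]

lemma chi_univ : chi (Set.univ : Set X) = 1 :=
  lp.ext <| funext fun x => by simp

lemma chi_union {S T : Set X} (h : Disjoint S T) : chi (S ∪ T) = chi S + chi T :=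
  lp.ext <| funext fun x => by simp [Set.indicator_union_of_disjoint h]

lemma chi_add_chi_compl (S : Set X) : chi S + chi Sᶜ = 1 := by
  rw [← chi_union disjoint_compl_right, Set.union_compl_self, chi_univ]

lemma chi_mul_add_chi_compl_mul (S : Set X) (f : Linf X) : chi S * f + chi Sᶜ * f = f := by
  rw [← add_mul, chi_add_chi_compl, one_mul]

@[simp] lemma chi_mul_apply (S : Set X) (f : Linf X) (x : X) : (chi S * f) x = chi S x * f x := by
  rw [lp.infty_coeFn_mul, Pi.mul_apply]

lemma chi_mul_self (S : Set X) : chi S * chi S = chi S :=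
  lp.ext <| funext fun x => by by_cases hx : x ∈ S <;> simp [hx]

lemma realPart_linf_apply (f : Linf X) (x : X) : (realPart f : Linf X) x = ((f x).re : ℂ) := by
  rw [realPart_apply_coe, ← Complex.coe_smul, lp.coeFn_smul, lp.coeFn_add, lp.coeFn_star]
  simp [Complex.ext_iff, ← two_mul]

lemma imaginaryPart_linf_apply (f : Linf X) (x : X) :
    (imaginaryPart f : Linf X) x = ((f x).im : ℂ) := by
  rw [imaginaryPart_apply_coe, ← Complex.coe_smul, lp.coeFn_smul, lp.coeFn_smul, lp.coeFn_sub,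
    lp.coeFn_star]
  simp [Complex.ext_iff, ← two_mul]

lemma Complex.norm_le_re_of_neg_le_of_le {z w : ℂ} (h₁ : -z ≤ w) (h₂ : z ≤ w) : ‖z‖ ≤ w.re := by
  obtain ⟨hre₁, him₁⟩ := Complex.le_def.1 h₁
  obtain ⟨hre₂, him₂⟩ := Complex.le_def.1 h₂
  rw [Complex.neg_re] at hre₁
  rw [Complex.neg_im] at him₁
  rw [← Complex.abs_re_eq_norm.2 (by linarith), abs_le]
  exact ⟨by linarith, hre₂⟩

namespace IsStateLinf

variable {ψ : Linf X →ₗ[ℂ] ℂ}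

lemma apply_chi_nonneg (hψ : IsStateLinf ψ) (S : Set X) : 0 ≤ ψ (chi S) :=
  hψ.2 _ (chi_nonneg S)

lemma apply_chi_compl (hψ : IsStateLinf ψ) (S : Set X) : ψ (chi Sᶜ) = 1 - ψ (chi S) := by
  rw [eq_sub_iff_add_eq', ← map_add, chi_add_chi_compl, hψ.1]

lemma apply_chi_le_one (hψ : IsStateLinf ψ) (S : Set X) : ψ (chi S) ≤ 1 :=
  sub_nonneg.1 (hψ.apply_chi_compl S ▸ hψ.apply_chi_nonneg Sᶜ)

lemma ofReal_re_apply_chi (hψ : IsStateLinf ψ) (S : Set X) : ((ψ (chi S)).re : ℂ) = ψ (chi S) :=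
  (Complex.eq_re_of_ofReal_le (r := 0) (by simpa using hψ.apply_chi_nonneg S)).symm

lemma norm_apply_le_of_im_eq_zero (hψ : IsStateLinf ψ) {f : Linf X} {T : Set X} {C : ℝ}
    (hf : ∀ x, (f x).im = 0) (hT : ∀ x ∉ T, f x = 0) (hC : ∀ x ∈ T, ‖f x‖ ≤ C) :
    ‖ψ f‖ ≤ C * (ψ (chi T)).re := by
  have hle : ∀ g : Linf X, (∀ x, g x = f x ∨ g x = -f x) → ψ g ≤ (C : ℂ) * ψ (chi T) := by
    intro g hg
    rw [← sub_nonneg, ← smul_eq_mul, ← map_smul, ← map_sub]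
    refine hψ.2 _ fun x => ?_
    rw [lp.coeFn_sub, lp.coeFn_smul, Pi.sub_apply, Pi.smul_apply, smul_eq_mul, sub_nonneg]
    by_cases hx : x ∈ T
    · have hfx := abs_le.1 ((Complex.abs_re_le_norm _).trans (hC x hx))
      rcases hg x with h | h <;> simp [h, hx, Complex.le_def, hf x, hfx.2, neg_le.1 hfx.1]
    · rcases hg x with h | h <;> simp [h, hx, hT x hx]
  simpa using Complex.norm_le_re_of_neg_le_of_le
    (by simpa using hle (-f) fun x => Or.inr rfl) (hle f fun x => Or.inl rfl)

lemma norm_apply_le (hψ : IsStateLinf ψ) {f : Linf X} {T : Set X} {C : ℝ}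
    (hT : ∀ x ∉ T, f x = 0) (hC : ∀ x ∈ T, ‖f x‖ ≤ C) :
    ‖ψ f‖ ≤ 2 * C * (ψ (chi T)).re := by
  have hre := hψ.norm_apply_le_of_im_eq_zero (f := realPart f) (C := C)
    (fun x => by simp [realPart_linf_apply]) (fun x hx => by simp [realPart_linf_apply, hT x hx])
    fun x hx => by
      simpa [realPart_linf_apply] using (Complex.abs_re_le_norm _).trans (hC x hx)
  have him := hψ.norm_apply_le_of_im_eq_zero (f := imaginaryPart f) (C := C)
    (fun x => by simp [imaginaryPart_linf_apply])
    (fun x hx => by simp [imaginaryPart_linf_apply, hT x hx])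
    fun x hx => by
      simpa [imaginaryPart_linf_apply] using (Complex.abs_im_le_norm _).trans (hC x hx)
  rw [← realPart_add_I_smul_imaginaryPart f, map_add, map_smul]
  calc ‖ψ (realPart f) + Complex.I • ψ (imaginaryPart f)‖
      ≤ ‖ψ (realPart f)‖ + ‖ψ (imaginaryPart f)‖ := by
        simpa using norm_add_le (ψ (realPart f)) (Complex.I • ψ (imaginaryPart f))
    _ ≤ 2 * C * (ψ (chi T)).re := by linarith

lemma apply_eq_zero_of_apply_chi_eq_zero (hψ : IsStateLinf ψ) {T : Set X} (hT : ψ (chi T) = 0)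
    {f : Linf X} (hf : ∀ x ∉ T, f x = 0) : ψ f = 0 :=
  norm_le_zero_iff.1 <| by
    simpa [hT] using hψ.norm_apply_le hf fun x _ => lp.norm_apply_le_norm ENNReal.top_ne_zero f x

lemma smul_comp_mulLeft_chi {φ : Linf X →ₗ[ℂ] ℂ} (hφ : IsStateLinf φ) {S : Set X}
    {t : ℝ} (ht : φ (chi S) = t) (ht0 : 0 < t) :
    IsStateLinf (t⁻¹ • φ ∘ₗ LinearMap.mulLeft ℂ (chi S)) := by
  refine ⟨?_, fun f hf => ?_⟩
  · simp [ht, Complex.real_smul, ht0.ne']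
  · exact smul_nonneg (inv_nonneg.2 ht0.le) <| hφ.2 _ fun x => by
      simpa using mul_nonneg (chi_nonneg S x) (hf x)

end IsStateLinf

lemma IsPureLinf.apply_chi_eq_zero_or_one {φ : Linf X →ₗ[ℂ] ℂ} (hφ : IsPureLinf φ) (S : Set X) :
    φ (chi S) = 0 ∨ φ (chi S) = 1 := by
  have hst : IsStateLinf φ := hφ.1
  set t := (φ (chi S)).re
  have ht : φ (chi S) = t := (hst.ofReal_re_apply_chi S).symm
  have ht' : φ (chi Sᶜ) = ((1 - t : ℝ) : ℂ) := by rw [hst.apply_chi_compl, ht]; push_cast; rfl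
  by_contra! h
  have ht0 : 0 < t := lt_of_le_of_ne (Complex.zero_le_real.1 (ht ▸ hst.apply_chi_nonneg S))
    fun h0 => h.1 (by rw [ht, ← h0, Complex.ofReal_zero])
  have ht1 : 0 < 1 - t :=
    sub_pos.2 <| lt_of_le_of_ne (by exact_mod_cast ht ▸ hst.apply_chi_le_one S)
      fun h1 => h.2 (by rw [ht, h1, Complex.ofReal_one])
  have hseg : φ ∈ openSegment ℝ (t⁻¹ • φ ∘ₗ LinearMap.mulLeft ℂ (chi S))
      ((1 - t)⁻¹ • φ ∘ₗ LinearMap.mulLeft ℂ (chi Sᶜ)) := by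
    refine ⟨t, 1 - t, ht0, ht1, by ring, LinearMap.ext fun f => ?_⟩
    simp [smul_smul, ht0.ne', ht1.ne', ← map_add, chi_mul_add_chi_compl_mul]
  have hφ₁ := hφ.2 (hst.smul_comp_mulLeft_chi ht ht0) (hst.smul_comp_mulLeft_chi ht' ht1) hseg
  refine h.2 ?_
  rw [← hφ₁]
  simp [chi_mul_self, ht, Complex.real_smul, ht0.ne']

section UltrafilterState

lemma tendsto_limUnder_ultrafilter (U : Ultrafilter X) (f : Linf X) :
    Tendsto f U (𝓝 (limUnder (U : Filter X) f)) := by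
  refine tendsto_nhds_limUnder ?_
  obtain ⟨a, -, ha⟩ := (isCompact_closedBall (0 : ℂ) ‖f‖).ultrafilter_le_nhds (U.map f) <|
    le_principal_iff.2 <| Ultrafilter.mem_map.2 <| univ_mem' fun x => by
      simpa using lp.norm_apply_le_norm ENNReal.top_ne_zero f x
  exact ⟨a, ha⟩

def ultrafilterState (U : Ultrafilter X) : Linf X →ₗ[ℂ] ℂ where
  toFun f := limUnder (U : Filter X) f
  map_add' f g := by
    rw [lp.coeFn_add]
    exact ((tendsto_limUnder_ultrafilter U f).add (tendsto_limUnder_ultrafilter U g)).limUnder_eq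
  map_smul' c f := by
    rw [lp.coeFn_smul]
    exact ((tendsto_limUnder_ultrafilter U f).const_smul c).limUnder_eq

variable {U : Ultrafilter X}

lemma tendsto_ultrafilterState (f : Linf X) : Tendsto f U (𝓝 (ultrafilterState U f)) :=
  tendsto_limUnder_ultrafilter U f

lemma ultrafilterState_eq_of_eventually_eq {f : Linf X} {c : ℂ} (h : ∀ᶠ x in U, f x = c) :
    ultrafilterState U f = c :=
  tendsto_nhds_unique (tendsto_ultrafilterState f) <|
    tendsto_const_nhds.congr' (h.mono fun _ hx => hx.symm)

lemma ultrafilterState_chi_of_mem {S : Set X} (hS : S ∈ U) : ultrafilterState U (chi S) = 1 :=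
  ultrafilterState_eq_of_eventually_eq <| Filter.mem_of_superset hS fun x hx => by simp [hx]

lemma ultrafilterState_chi_of_notMem {S : Set X} (hS : S ∉ U) : ultrafilterState U (chi S) = 0 :=
  ultrafilterState_eq_of_eventually_eq <|
    Filter.mem_of_superset (Ultrafilter.compl_mem_iff_notMem.2 hS) fun x hx => by simp_all

lemma isStateLinf_ultrafilterState (U : Ultrafilter X) : IsStateLinf (ultrafilterState U) :=
  ⟨ultrafilterState_eq_of_eventually_eq (Eventually.of_forall fun x => by simp),
    fun f hf => isClosed_Ici.mem_of_tendsto (tendsto_ultrafilterState f) (Eventually.of_forall hf)⟩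

lemma singularLinf_ultrafilterState (hU : (U : Filter X) ≤ cofinite) :
    SingularLinf (ultrafilterState U) := fun f hf =>
  ultrafilterState_eq_of_eventually_eq <| hU <|
    Filter.mem_of_superset hf.compl_mem_cofinite fun x hx => by simpa using hx

lemma IsStateLinf.eq_ultrafilterState {ψ : Linf X →ₗ[ℂ] ℂ} (hψ : IsStateLinf ψ)
    (hU : ∀ S ∈ U, ψ (chi S) = 1) : ψ = ultrafilterState U := by
  ext f
  set a := ultrafilterState U f
  refine eq_of_forall_dist_le fun ε hε => ?_
  set T := f ⁻¹' Metric.closedBall a (ε / 2)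
  have hTU : T ∈ U := tendsto_ultrafilterState f (Metric.closedBall_mem_nhds a (half_pos hε))
  set g := f - a • 1
  have hg : ∀ x, g x = f x - a := fun x => by
    change f x - a * (1 : Linf X) x = _
    simp
  have hψg : ψ g = ψ f - a := by simp [g, hψ.1]
  -- `g` is `ε / 2`-small on `T`, and `ψ` does not see `Tᶜ`.
  have hout : ψ (chi Tᶜ * g) = 0 :=
    hψ.apply_eq_zero_of_apply_chi_eq_zero (by rw [hψ.apply_chi_compl, hU T hTU, sub_self])
      fun x hx => by simp [hx]
  have hin : ‖ψ (chi T * g)‖ ≤ 2 * (ε / 2) * (ψ (chi T)).re :=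
    hψ.norm_apply_le (fun x hx => by simp [hx]) fun x hx => by
      have hfx : ‖f x - a‖ ≤ ε / 2 := by simpa [T, dist_eq_norm] using hx
      simpa [hx, hg] using hfx
  rw [hU T hTU, Complex.one_re, mul_one, mul_div_cancel₀ ε two_ne_zero] at hin
  rwa [dist_eq_norm, ← hψg, ← chi_mul_add_chi_compl_mul T g, map_add, hout, add_zero]

lemma isPureLinf_ultrafilterState (U : Ultrafilter X) : IsPureLinf (ultrafilterState U) := by
  refine ⟨isStateLinf_ultrafilterState U, fun ψ₁ h₁ ψ₂ h₂ ⟨a, b, ha, hb, hab, hφ⟩ => ?_⟩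
  refine h₁.eq_ultrafilterState fun S hS => ?_
  have hsum : (a : ℂ) * (1 - ψ₁ (chi S)) + b * (1 - ψ₂ (chi S)) = 0 := by
    have := congrArg (· (chi S)) hφ
    simp only [LinearMap.add_apply, LinearMap.smul_apply, Complex.real_smul,
      ultrafilterState_chi_of_mem hS] at this
    linear_combination (by exact_mod_cast hab : (a : ℂ) + b = 1) - this
  have h₁' := mul_nonneg (Complex.zero_le_real.2 ha.le) (sub_nonneg.2 (h₁.apply_chi_le_one S))
  have h₂' := mul_nonneg (Complex.zero_le_real.2 hb.le) (sub_nonneg.2 (h₂.apply_chi_le_one S))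
  have := ((add_eq_zero_iff_of_nonneg h₁' h₂').1 hsum).1
  rw [mul_eq_zero, sub_eq_zero, Complex.ofReal_eq_zero] at this
  exact this.resolve_left ha.ne' |>.symm

end UltrafilterState

namespace IsFAProb

variable {μ : Set X → ℝ}

lemma inter_add_diff (hμ : IsFAProb μ) (S T : Set X) : μ (S ∩ T) + μ (S \ T) = μ S := by
  rw [← hμ.2.2 _ _ (Set.disjoint_iff_inter_eq_empty.1 Set.disjoint_sdiff_inter.symm),
    Set.inter_union_sdiff]

lemma compl (hμ : IsFAProb μ) (S : Set X) : μ Sᶜ = 1 - μ S := by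
  simpa [Set.compl_eq_univ_sdiff, hμ.2.1, eq_sub_iff_add_eq'] using hμ.inter_add_diff Set.univ S

lemma mono (hμ : IsFAProb μ) {S T : Set X} (h : S ⊆ T) : μ S ≤ μ T := by
  linarith [hμ.inter_add_diff T S, Set.inter_eq_right.2 h ▸ hμ.inter_add_diff T S, hμ.1 (T \ S)]

end IsFAProb

namespace TwoValuedMeas

variable {μ : Set X → ℝ}

def toUltrafilter (h2 : TwoValuedMeas μ) (hμ : IsFAProb μ) : Ultrafilter X :=
  Ultrafilter.ofComplNotMemIff
    { sets := {S | μ S = 1}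
      univ_sets := hμ.2.1
      sets_of_superset := fun {S T} hS hST =>
        le_antisymm (hμ.2.1 ▸ hμ.mono (Set.subset_univ T)) (hS ▸ hμ.mono hST)
      inter_sets := fun {S T} (hS : μ S = 1) (hT : μ T = 1) => by
        have hdiff : μ (S \ T) = 0 := le_antisymm
          (by simpa [hμ.compl, hT] using hμ.mono (Set.sdiff_subset_compl S T)) (hμ.1 _)
        simpa [hdiff, hS] using hμ.inter_add_diff S T }
    fun S => by
      change μ Sᶜ ≠ 1 ↔ μ S = 1
      rw [hμ.compl]
      rcases h2 S with h | h <;> norm_num [h]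

lemma mem_toUltrafilter (h2 : TwoValuedMeas μ) (hμ : IsFAProb μ) {S : Set X} :
    S ∈ h2.toUltrafilter hμ ↔ μ S = 1 := Iff.rfl

lemma toUltrafilter_le_cofinite (h2 : TwoValuedMeas μ) (hμ : IsFAProb μ)
    (h0 : VanishesOnSingletons μ) : (h2.toUltrafilter hμ : Filter X) ≤ cofinite := by
  refine (h2.toUltrafilter hμ).le_cofinite_or_eq_pure.resolve_right ?_
  rintro ⟨x, hx⟩
  have hmem : {x} ∈ h2.toUltrafilter hμ := hx ▸ Ultrafilter.mem_pure.2 rfl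
  rw [mem_toUltrafilter, h0 x] at hmem
  exact zero_ne_one hmem

lemma ultrafilterState_toUltrafilter_chi (h2 : TwoValuedMeas μ) (hμ : IsFAProb μ) (S : Set X) :
    ultrafilterState (h2.toUltrafilter hμ) (chi S) = μ S := by
  rcases h2 S with h | h
  · rw [ultrafilterState_chi_of_notMem (by rw [mem_toUltrafilter, h]; norm_num), h,
      Complex.ofReal_zero]
  · rw [ultrafilterState_chi_of_mem ((mem_toUltrafilter h2 hμ).2 h), h, Complex.ofReal_one]

end TwoValuedMeas

section Correspondence

variable {φ : Linf X →ₗ[ℂ] ℂ} {μ : Set X → ℝ}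

lemma exists_pure_singular_of_twoValued (hμ : IsFAProb μ) (h2 : TwoValuedMeas μ)
    (h0 : VanishesOnSingletons μ) :
    ∃ φ : Linf X →ₗ[ℂ] ℂ, IsPureLinf φ ∧ SingularLinf φ ∧ ∀ S, φ (chi S) = μ S :=
  ⟨_, isPureLinf_ultrafilterState _,
    singularLinf_ultrafilterState (h2.toUltrafilter_le_cofinite hμ h0),
    h2.ultrafilterState_toUltrafilter_chi hμ⟩

lemma IsPureLinf.exists_twoValued (hφ : IsPureLinf φ) (hs : SingularLinf φ) :
    ∃ μ : Set X → ℝ, IsFAProb μ ∧ TwoValuedMeas μ ∧ VanishesOnSingletons μ ∧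
      ∀ S, φ (chi S) = μ S := by
  have hst : IsStateLinf φ := hφ.1
  refine ⟨fun S => (φ (chi S)).re, ⟨fun S => ?_, ?_, fun S T hST => ?_⟩, fun S => ?_, fun x => ?_,
    fun S => (hst.ofReal_re_apply_chi S).symm⟩
  · exact (Complex.nonneg_iff.1 (hst.apply_chi_nonneg S)).1
  · simp [chi_univ, hst.1]
  · simp [chi_union (Set.disjoint_iff_inter_eq_empty.2 hST)]
  · rcases hφ.apply_chi_eq_zero_or_one S with h | h <;> simp [h]
  · simp [hs (chi {x}) ((Set.finite_singleton x).subset Set.support_indicator_subset)]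

lemma apply_chi_iUnion_eq_tsum_iff (h : ∀ S, φ (chi S) = μ S) {ι : Type} (S : ι → Set X) :
    φ (chi (⋃ i, S i)) = ∑' i, φ (chi (S i)) ↔ μ (⋃ i, S i) = ∑' i, μ (S i) := by
  simp_rw [h, ← Complex.ofReal_tsum, Complex.ofReal_inj]

lemma countablyAdditiveLinf_iff (h : ∀ S, φ (chi S) = μ S) :
    CountablyAdditiveLinf φ ↔ CountablyAdditiveMeas μ :=
  forall₂_congr fun S _ => apply_chi_iUnion_eq_tsum_iff h S

lemma kappaAdditiveLinf_iff (h : ∀ S, φ (chi S) = μ S) (κ : Cardinal.{0}) :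
    KappaAdditiveLinf κ φ ↔ KappaAdditiveMeas κ μ := by
  simp only [KappaAdditiveLinf, KappaAdditiveMeas, apply_chi_iUnion_eq_tsum_iff h]

lemma exists_twoValued_iff_exists_pure_singular {P : (Set X → ℝ) → Prop}
    {Q : (Linf X →ₗ[ℂ] ℂ) → Prop} (hPQ : ∀ φ μ, (∀ S, φ (chi S) = μ S) → (Q φ ↔ P μ)) :
    (∃ μ : Set X → ℝ, IsFAProb μ ∧ TwoValuedMeas μ ∧ P μ ∧ VanishesOnSingletons μ) ↔
      ∃ φ : Linf X →ₗ[ℂ] ℂ, IsPureLinf φ ∧ SingularLinf φ ∧ Q φ := by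
  constructor
  · rintro ⟨μ, hμ, h2, hP, h0⟩
    obtain ⟨φ, hφ, hs, hφμ⟩ := exists_pure_singular_of_twoValued hμ h2 h0
    exact ⟨φ, hφ, hs, (hPQ φ μ hφμ).2 hP⟩
  · rintro ⟨φ, hφ, hs, hQ⟩
    obtain ⟨μ, hμ, h2, h0, hφμ⟩ := hφ.exists_twoValued hs
    exact ⟨μ, hμ, h2, (hPQ φ μ hφμ).1 hQ, h0⟩

end Correspondence

theorem measurable_iff_singular_pure_state_linf_general (κ : Cardinal.{0}) (X : Type) :
    ((∃ μ : Set X → ℝ, IsFAProb μ ∧ TwoValuedMeas μ ∧ CountablyAdditiveMeas μ ∧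
        VanishesOnSingletons μ) ↔
      (∃ φ : Linf X →ₗ[ℂ] ℂ, IsPureLinf φ ∧ SingularLinf φ ∧ CountablyAdditiveLinf φ)) ∧
    ((∃ μ : Set X → ℝ, IsFAProb μ ∧ TwoValuedMeas μ ∧ KappaAdditiveMeas κ μ ∧
        VanishesOnSingletons μ) ↔
      (∃ φ : Linf X →ₗ[ℂ] ℂ, IsPureLinf φ ∧ SingularLinf φ ∧ KappaAdditiveLinf κ φ)) :=
  ⟨exists_twoValued_iff_exists_pure_singular fun _ _ h => countablyAdditiveLinf_iff h,
    exists_twoValued_iff_exists_pure_singular fun _ _ h => kappaAdditiveLinf_iff h κ⟩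

/-- Proposition 3 (ii) and (iv) of "Quantum measurable cardinals": an uncountable cardinal `κ`
is Ulam measurable iff there is a singular countably additive pure state on `l^∞(κ)`, and
measurable iff there is a singular `<κ`-additive pure state on `l^∞(κ)`. -/
theorem measurable_iff_singular_pure_state_linf (κ : Cardinal.{0}) (hκ : Cardinal.aleph0 < κ)
    (X : Type) (hX : Cardinal.mk X = κ) :
    ((∃ μ : Set X → ℝ, IsFAProb μ ∧ TwoValuedMeas μ ∧ CountablyAdditiveMeas μ ∧
        VanishesOnSingletons μ) ↔
      (∃ φ : Linf X →ₗ[ℂ] ℂ, IsPureLinf φ ∧ SingularLinf φ ∧ CountablyAdditiveLinf φ)) ∧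
    ((∃ μ : Set X → ℝ, IsFAProb μ ∧ TwoValuedMeas μ ∧ KappaAdditiveMeas κ μ ∧
        VanishesOnSingletons μ) ↔
      (∃ φ : Linf X →ₗ[ℂ] ℂ, IsPureLinf φ ∧ SingularLinf φ ∧ KappaAdditiveLinf κ φ)) :=
  measurable_iff_singular_pure_state_linf_general κ X
end
end

section
/- Let κ be an uncountable cardinal, μ a <κ-additive probability measure defined on all subsets of a set X, ι a type of cardinality strictly less than κ, and (f_α)_{α∈ι} a family of bounded functions X → [0,∞). Then ∫⁻ (fun x => ∑'_α f_α x) dμ = ∑'_α ∫⁻ f_α dμ. -/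
/-!
If `∑' a, ∫⁻ f a ∂μ` is infinite, the easy inequality `∑' ∫⁻ ≤ ∫⁻ ∑'` already gives equality.
Otherwise only countably many `f a` have nonzero integral, and each of the remaining ones vanishes
off a null set. There are fewer than `κ` of these null sets, and `<κ`-additivity (applied after
disjointifying them by a choice of index for every point) makes their union null. Almost everywhere
the sum therefore runs over a countable set, where the ordinary monotone convergence theorem applies.
-/

open MeasureTheory Cardinal

open scoped ENNReal

theorem Set.exists_pairwise_disjoint_subset_iUnion_eq {α ι : Type*} (S : ι → Set α) :
    ∃ D : ι → Set α, (∀ i, D i ⊆ S i) ∧ Pairwise (Function.onFun Disjoint D) ∧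
      ⋃ i, D i = ⋃ i, S i := by
  let D : ι → Set α := fun i => {x | ∃ h : x ∈ ⋃ j, S j, (Set.mem_iUnion.1 h).choose = i}
  refine ⟨D, ?_, ?_, ?_⟩
  · rintro i x ⟨h, rfl⟩
    exact (Set.mem_iUnion.1 h).choose_spec
  · rintro i j hij
    exact Set.disjoint_left.2 fun x ⟨h, hi⟩ ⟨_, hj⟩ => hij (hi.symm.trans hj)
  · refine Set.Subset.antisymm (Set.iUnion_mono fun i x ⟨h, hi⟩ => hi ▸ ?_) fun x h => ?_
    · exact (Set.mem_iUnion.1 h).choose_spec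
    · exact Set.mem_iUnion.2 ⟨_, h, rfl⟩

namespace MeasureTheory.Measure

variable {X : Type*} [MeasurableSpace X]

def LtAdditive (κ : Cardinal.{0}) (μ : Measure X) : Prop :=
  ∀ (ι : Type) (S : ι → Set X), #ι < κ →
    Pairwise (Function.onFun Disjoint S) → μ (⋃ i, S i) = ∑' i, μ (S i)

variable {κ : Cardinal.{0}} {μ : Measure X} {ι : Type}

theorem LtAdditive.measure_iUnion_le (h : μ.LtAdditive κ) (hι : #ι < κ) (S : ι → Set X) :
    μ (⋃ i, S i) ≤ ∑' i, μ (S i) := by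
  obtain ⟨D, hDS, hD, hDU⟩ := Set.exists_pairwise_disjoint_subset_iUnion_eq S
  calc μ (⋃ i, S i) = ∑' i, μ (D i) := hDU ▸ h ι D hι hD
    _ ≤ ∑' i, μ (S i) := ENNReal.tsum_le_tsum fun i => measure_mono (hDS i)

theorem LtAdditive.measure_iUnion_null (h : μ.LtAdditive κ) (hι : #ι < κ) {S : ι → Set X}
    (hS : ∀ i, μ (S i) = 0) : μ (⋃ i, S i) = 0 :=
  nonpos_iff_eq_zero.1 <| (h.measure_iUnion_le hι S).trans_eq <| by simp [hS]

theorem LtAdditive.ae_all_iff (h : μ.LtAdditive κ) (hι : #ι < κ) {p : ι → X → Prop} :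
    (∀ᵐ x ∂μ, ∀ i, p i x) ↔ ∀ i, ∀ᵐ x ∂μ, p i x := by
  refine ⟨fun hp i => hp.mono fun x hx => hx i, fun hp => ?_⟩
  simp only [ae_iff] at hp ⊢
  simpa only [not_forall, Set.ofPred_exists] using h.measure_iUnion_null hι hp

end MeasureTheory.Measure

section

variable {X ι : Type*} [MeasurableSpace X] {μ : Measure X} {f : ι → X → ℝ≥0∞}

theorem tsum_lintegral_le_lintegral_tsum (hf : ∀ i, AEMeasurable (f i) μ) :
    ∑' i, ∫⁻ x, f i x ∂μ ≤ ∫⁻ x, ∑' i, f i x ∂μ := by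
  rw [ENNReal.tsum_eq_iSup_sum]
  refine iSup_le fun s => ?_
  rw [← lintegral_finsetSum' s fun i _ => hf i]
  exact lintegral_mono fun x => ENNReal.sum_le_tsum s

theorem lintegral_tsum_of_ae_support_subset {s : Set ι} (hs : s.Countable)
    (hf : ∀ i, AEMeasurable (f i) μ) (hsupp : ∀ᵐ x ∂μ, (Function.support fun i => f i x) ⊆ s) :
    ∫⁻ x, ∑' i, f i x ∂μ = ∑' i, ∫⁻ x, f i x ∂μ := by
  have : Countable s := hs.to_subtype
  have hint : (Function.support fun i => ∫⁻ x, f i x ∂μ) ⊆ s := fun i hi => by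
    by_contra his
    refine hi (lintegral_eq_zero_iff' (hf i) |>.2 ?_)
    filter_upwards [hsupp] with x hx
    exact Function.notMem_support.1 fun hxi => his (hx hxi)
  calc ∫⁻ x, ∑' i, f i x ∂μ = ∫⁻ x, ∑' i : s, f i x ∂μ :=
        lintegral_congr_ae <| hsupp.mono fun x hx => (tsum_subtype_eq_of_support_subset hx).symm
    _ = ∑' i : s, ∫⁻ x, f i x ∂μ := lintegral_tsum fun i => hf i
    _ = ∑' i, ∫⁻ x, f i x ∂μ := tsum_subtype_eq_of_support_subset hint

end

theorem lintegral_tsum_of_lt_kappa_general (κ : Cardinal.{0})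
    {X : Type} [m : MeasurableSpace X] (hm : m = ⊤)
    (μ : Measure X)
    (hadd : ∀ (ι : Type) (S : ι → Set X), Cardinal.mk ι < κ →
      Pairwise (Function.onFun Disjoint S) → μ (⋃ i, S i) = ∑' i, μ (S i))
    (ι : Type) (hι : Cardinal.mk ι < κ) (f : ι → X → ENNReal) :
    ∫⁻ x, ∑' a, f a x ∂μ = ∑' a, ∫⁻ x, f a x ∂μ := by
  have hmeas : ∀ a, AEMeasurable (f a) μ := fun a => (hm ▸ measurable_from_top).aemeasurable
  obtain htop | htop := eq_or_ne (∑' a, ∫⁻ x, f a x ∂μ) ∞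
  · rw [htop, ← top_le_iff, ← htop]
    exact tsum_lintegral_le_lintegral_tsum hmeas
  refine lintegral_tsum_of_ae_support_subset (Summable.countable_support_ennreal htop) hmeas ?_
  have hnull (a : ι) : ∀ᵐ x ∂μ, f a x ≠ 0 → ∫⁻ y, f a y ∂μ ≠ 0 := by
    by_cases ha : ∫⁻ y, f a y ∂μ = 0
    · filter_upwards [(lintegral_eq_zero_iff' (hmeas a)).1 ha] with x hx
      simp [hx]
    · exact .of_forall fun _ _ => ha
  exact ((Measure.LtAdditive.ae_all_iff hadd hι).2 hnull).mono fun x hx a => hx a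

/-- Lemma 6 of "Quantum measurable cardinals": a transfinite monotone convergence theorem for
`<κ`-additive probability measures defined on all subsets of a set `X`. -/
theorem lintegral_tsum_of_lt_kappa (κ : Cardinal.{0}) (hκ : Cardinal.aleph0 < κ)
    {X : Type} [m : MeasurableSpace X] (hm : m = ⊤)
    (μ : Measure X) (hprob : IsProbabilityMeasure μ)
    (hadd : ∀ (ι : Type) (S : ι → Set X), Cardinal.mk ι < κ →
      Pairwise (Function.onFun Disjoint S) → μ (⋃ i, S i) = ∑' i, μ (S i))
    (ι : Type) (hι : Cardinal.mk ι < κ) (f : ι → X → ENNReal)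
    (hf : ∀ a : ι, ∃ C : ENNReal, C ≠ ⊤ ∧ ∀ x : X, f a x ≤ C) :
    ∫⁻ x, ∑' a, f a x ∂μ = ∑' a, ∫⁻ x, f a x ∂μ :=
  lintegral_tsum_of_lt_kappa_general κ (m := m) hm μ hadd ι hι f
end
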